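/- If u_n ≥ 0 for every non-negative integer n, then f is non-decreasing on [0, 1]; together with f(0) = 0, f(1) = 1 and continuity, f is a probability distribution function on [0,1]. Moreover, f is the distribution function of the random variable ξ = Δ^E_{η_1 η_2 …}, where (η_k) is an i.i.d. sequence of ℕ-valued random variables with P(η_k = n) = u_n; that is, for every x ∈ (0,1], f(x) = μ{ g ∈ ℕ^ℕ : Δ^E_g < x }, where μ is the infinite product of the probability measure on ℕ assigning mass u_n to n. -/

import Mathlib

open scoped BigOperators

/-- The value `Δ^E_g` of the Engel series with digit sequence `g`
(`g n` is the paper's `g_{n+1}`). -/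
noncomputable def engelSum (g : ℕ → ℕ) : ℝ :=
  ∑' n : ℕ, ∏ k ∈ Finset.range (n + 1),
    ((2 : ℝ) + ∑ i ∈ Finset.range (k + 1), (g i : ℝ))⁻¹

/-- The value of the series `r_{g_1} + ∑_{k≥2} r_{g_k} ∏_{i=1}^{k-1} u_{g_i}`
defining `f` on the digit sequence `g`. -/
noncomputable def fSeries (u r : ℕ → ℝ) (g : ℕ → ℕ) : ℝ :=
  r (g 0) + ∑' k : ℕ, r (g (k + 1)) * ∏ i ∈ Finset.range (k + 1), u (g i)

/-- `rpred r n = r (n-1)`, with the convention `r (-1) = 1`. -/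
noncomputable def rpred (r : ℕ → ℝ) (n : ℕ) : ℝ := if n = 0 then 1 else r (n - 1)

/-!
Both series are self-similar in the digits: dropping the first digit `g 0` turns `engelSum g` into
an Engel series with base `2 + g 0`, and `fSeries g` into `(fSeries g - r (g 0)) / u (g 0)`.
Induction on the first position where two digit sequences differ then shows that `engelSum` is
strictly decreasing and `fSeries` non-increasing for the lexicographic order, so `f` is
non-decreasing. A greedy digit expansion shows that `fSeries` takes every value in `(0, 1]`, and a
monotone map of `[0, 1]` onto `[0, 1]` is continuous. Finally, `engelSum η < engelSum g` means that
`η` agrees with `g` before some position `k` and exceeds it at `k`; by independence this event has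
probability `r (g k) * ∏_{i<k} u (g i)`, the `k`-th term of `fSeries g`.
-/

open Finset Filter Function Topology MeasureTheory ProbabilityTheory

theorem MonotoneOn.continuousOn_of_mapsTo_of_surjOn {α β : Type*} [LinearOrder α]
    [TopologicalSpace α] [OrderTopology α] [LinearOrder β] [TopologicalSpace β] [OrderTopology β]
    [DenselyOrdered β] {f : α → β} {s : Set α} {t : Set β} [s.OrdConnected] [t.OrdConnected]
    (hf : MonotoneOn f s) (hmaps : Set.MapsTo f s t) (hsurj : Set.SurjOn f s t) :
    ContinuousOn f s := by
  have : Continuous (hmaps.restrict f s t) :=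
    Monotone.continuous_of_surjective (fun x y hxy => hf x.2 y.2 hxy)
      (hmaps.restrict_surjective_iff.2 hsurj)
  exact continuousOn_iff_continuous_domRestrict.2 (continuous_subtype_val.comp this)

section Engel

noncomputable def engelTerm (b : ℝ) (g : ℕ → ℕ) (n : ℕ) : ℝ :=
  ∏ k ∈ range (n + 1), (b + ∑ i ∈ range (k + 1), (g i : ℝ))⁻¹

noncomputable def engelSeries (b : ℝ) (g : ℕ → ℕ) : ℝ := ∑' n, engelTerm b g n

variable {b : ℝ}

theorem engelSum_eq_engelSeries (g : ℕ → ℕ) : engelSum g = engelSeries 2 g := rfl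

theorem engelTerm_pos (hb : 0 < b) (g : ℕ → ℕ) (n : ℕ) : 0 < engelTerm b g n :=
  prod_pos fun _ _ => by positivity

theorem engelTerm_le_pow (hb : 0 < b) (g : ℕ → ℕ) (n : ℕ) :
    engelTerm b g n ≤ b⁻¹ ^ (n + 1) := by
  rw [← card_range (n + 1), ← prod_const]
  exact prod_le_prod (fun _ _ => by positivity) fun k _ =>
    inv_anti₀ hb (le_add_of_nonneg_right (by positivity))

theorem summable_engelTerm (hb : 1 < b) (g : ℕ → ℕ) : Summable (engelTerm b g) :=
  (summable_geometric_of_lt_one (by positivity) (inv_lt_one_of_one_lt₀ hb)).comp_injective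
    (add_left_injective 1) |>.of_nonneg_of_le (fun n => (engelTerm_pos (by linarith) g n).le)
    (engelTerm_le_pow (by linarith) g)

theorem engelSeries_pos (hb : 1 < b) (g : ℕ → ℕ) : 0 < engelSeries b g :=
  (summable_engelTerm hb g).tsum_pos (fun n => (engelTerm_pos (by linarith) g n).le) 0
    (engelTerm_pos (by linarith) g 0)

theorem engelSeries_le (hb : 1 < b) (g : ℕ → ℕ) : engelSeries b g ≤ (b - 1)⁻¹ := by
  have hgeom : HasSum (fun n : ℕ => b⁻¹ ^ (n + 1)) (b - 1)⁻¹ := by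
    have h := (hasSum_geometric_of_lt_one (by positivity) (inv_lt_one_of_one_lt₀ hb)).mul_left b⁻¹
    rw [← mul_inv, mul_sub, mul_one, mul_inv_cancel₀ (by positivity)] at h
    simpa only [← pow_succ'] using h
  exact hasSum_le (engelTerm_le_pow (by linarith) g) (summable_engelTerm hb g).hasSum hgeom

theorem engelTerm_succ (g : ℕ → ℕ) (n : ℕ) :
    engelTerm b g (n + 1) = (b + g 0)⁻¹ * engelTerm (b + g 0) (fun i => g (i + 1)) n := by
  rw [engelTerm, prod_range_succ', engelTerm, mul_comm]
  simp only [sum_range_succ' _ (_ + 1), zero_add, sum_range_one]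
  congr 1
  refine prod_congr rfl fun k _ => ?_
  ring_nf

theorem engelSeries_eq (hb : 1 < b) (g : ℕ → ℕ) :
    engelSeries b g = (b + g 0)⁻¹ * (1 + engelSeries (b + g 0) (fun n => g (n + 1))) := by
  rw [engelSeries, (summable_engelTerm hb g).tsum_eq_zero_add]
  simp only [engelTerm_succ, tsum_mul_left]
  simp [engelSeries, engelTerm]
  ring

theorem engelSeries_lt_of_lex {k : ℕ} {g h : ℕ → ℕ} (hb : 1 < b) (heq : ∀ i < k, g i = h i)
    (hk : g k < h k) : engelSeries b h < engelSeries b g := by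
  induction k generalizing b g h with
  | zero =>
    have hgh : (g 0 : ℝ) + 1 ≤ h 0 := by exact_mod_cast hk
    have hg : 1 < b + g 0 := by linarith [(g 0).cast_nonneg (α := ℝ)]
    have hh : 1 < b + h 0 := by linarith
    -- the largest value with first digit `h 0` is at most the smallest with first digit `g 0`
    calc engelSeries b h ≤ (b + h 0)⁻¹ * (1 + (b + h 0 - 1)⁻¹) := by
          rw [engelSeries_eq hb h]
          gcongr
          exact engelSeries_le hh _
      _ = (b + h 0 - 1)⁻¹ := by
          have : b + h 0 - 1 ≠ 0 := by linarith
          field_simp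
          ring
      _ ≤ (b + g 0)⁻¹ := inv_anti₀ (by linarith) (by linarith)
      _ < engelSeries b g := by
          rw [engelSeries_eq hb g]
          have := engelSeries_pos hg (fun n => g (n + 1))
          have : 0 < (b + g 0)⁻¹ := by positivity
          nlinarith
  | succ k ih =>
    have h0 : g 0 = h 0 := heq 0 k.succ_pos
    have hg : 1 < b + g 0 := by linarith [(g 0).cast_nonneg (α := ℝ)]
    rw [engelSeries_eq hb g, engelSeries_eq hb h, ← h0]
    gcongr
    exact ih hg (fun i hi => heq (i + 1) (by omega)) hk

theorem engelSeries_strictAnti (hb : 1 < b) :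
    StrictAnti fun g : Lex (ℕ → ℕ) => engelSeries b (ofLex g) :=
  fun _ _ ⟨_, heq, hk⟩ => engelSeries_lt_of_lex hb heq hk

theorem engelSum_lt_engelSum_iff {g h : ℕ → ℕ} : engelSum g < engelSum h ↔ toLex h < toLex g :=
  (engelSeries_strictAnti one_lt_two).lt_iff_gt

theorem engelSum_le_engelSum_iff {g h : ℕ → ℕ} : engelSum g ≤ engelSum h ↔ toLex h ≤ toLex g :=
  (engelSeries_strictAnti one_lt_two).le_iff_ge

theorem engelSum_mem_Ioc (g : ℕ → ℕ) : engelSum g ∈ Set.Ioc 0 1 :=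
  ⟨engelSeries_pos one_lt_two g, (engelSeries_le one_lt_two g).trans_eq (by norm_num)⟩

theorem engelSum_zero : engelSum (fun _ => 0) = 1 := by
  have h := engelSeries_eq one_lt_two (fun _ => 0)
  simp only [Nat.cast_zero, add_zero] at h
  rw [engelSum_eq_engelSeries]
  linarith

end Engel

section FSeries

variable {u r : ℕ → ℝ} (hpos : ∀ n, 0 ≤ u n) (hr : ∀ n, r n = 1 - ∑ i ∈ range (n + 1), u i)
  (hr0 : ∀ n, 0 ≤ r n)

noncomputable def fTerm (u r : ℕ → ℝ) (g : ℕ → ℕ) (k : ℕ) : ℝ :=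
  r (g k) * ∏ i ∈ range k, u (g i)

include hpos hr0 in
theorem fTerm_nonneg (g : ℕ → ℕ) (k : ℕ) : 0 ≤ fTerm u r g k :=
  mul_nonneg (hr0 _) (prod_nonneg fun _ _ => hpos _)

include hr in
theorem r_add_u (n : ℕ) : r n + u n = 1 - ∑ i ∈ range n, u i := by
  rw [hr, sum_range_succ]; ring

include hpos hr in
theorem sum_range_fTerm_le (g : ℕ → ℕ) (N : ℕ) :
    ∑ k ∈ range N, fTerm u r g k ≤ 1 - ∏ i ∈ range N, u (g i) := by
  have hstep : ∀ k, fTerm u r g k ≤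
      ∏ i ∈ range k, u (g i) - ∏ i ∈ range (k + 1), u (g i) := fun k => by
    have : r (g k) ≤ 1 - u (g k) := by
      linarith [r_add_u hr (g k), sum_nonneg fun i (_ : i ∈ range (g k)) => hpos i]
    rw [fTerm, prod_range_succ]
    nlinarith [prod_nonneg fun i (_ : i ∈ range k) => hpos (g i)]
  calc ∑ k ∈ range N, fTerm u r g k
      ≤ ∑ k ∈ range N, (∏ i ∈ range k, u (g i) - ∏ i ∈ range (k + 1), u (g i)) :=
        sum_le_sum fun k _ => hstep k
    _ = 1 - ∏ i ∈ range N, u (g i) := by rw [sum_range_sub']; simp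

include hpos hr hr0 in
theorem summable_fTerm (g : ℕ → ℕ) : Summable (fTerm u r g) :=
  summable_of_sum_range_le (c := 1) (fTerm_nonneg hpos hr0 g) fun N => by
    linarith [sum_range_fTerm_le hpos hr g N, prod_nonneg fun i (_ : i ∈ range N) => hpos (g i)]

include hpos hr hr0 in
theorem hasSum_fTerm (g : ℕ → ℕ) : HasSum (fTerm u r g) (fSeries u r g) := by
  rw [← hasSum_nat_add_iff' 1]
  simpa [fSeries, fTerm] using ((summable_nat_add_iff 1).2 (summable_fTerm hpos hr hr0 g)).hasSum

include hpos hr hr0 in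
theorem fSeries_nonneg (g : ℕ → ℕ) : 0 ≤ fSeries u r g :=
  (hasSum_fTerm hpos hr hr0 g).nonneg (fTerm_nonneg hpos hr0 g)

include hpos hr hr0 in
theorem fSeries_le_one (g : ℕ → ℕ) : fSeries u r g ≤ 1 :=
  (hasSum_fTerm hpos hr hr0 g).tsum_eq ▸ Real.tsum_le_of_sum_range_le (fTerm_nonneg hpos hr0 g)
    fun N => by
      linarith [sum_range_fTerm_le hpos hr g N, prod_nonneg fun i (_ : i ∈ range N) => hpos (g i)]

include hpos hr hr0 in
theorem fSeries_eq (g : ℕ → ℕ) :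
    fSeries u r g = r (g 0) + u (g 0) * fSeries u r (fun n => g (n + 1)) := by
  rw [fSeries, ← (hasSum_fTerm hpos hr hr0 _).tsum_eq, ← tsum_mul_left]
  congr 2 with k
  rw [fTerm, prod_range_succ']
  ring

include hpos hr hr0 in
theorem fSeries_le_one_sub_sum (g : ℕ → ℕ) :
    fSeries u r g ≤ 1 - ∑ i ∈ range (g 0), u i := by
  rw [fSeries_eq hpos hr hr0, ← r_add_u hr]
  have := fSeries_le_one hpos hr hr0 (fun n => g (n + 1))
  nlinarith [hpos (g 0)]

include hpos hr hr0 in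
theorem fSeries_le_of_lex {k : ℕ} {g h : ℕ → ℕ} (heq : ∀ i < k, g i = h i) (hk : g k < h k) :
    fSeries u r h ≤ fSeries u r g := by
  induction k generalizing g h with
  | zero =>
    calc fSeries u r h ≤ 1 - ∑ i ∈ range (h 0), u i := fSeries_le_one_sub_sum hpos hr hr0 h
      _ ≤ 1 - ∑ i ∈ range (g 0 + 1), u i := by
          gcongr
          · exact fun i _ _ => hpos i
          · exact hk
      _ = r (g 0) := (hr _).symm
      _ ≤ fSeries u r g := by
          rw [fSeries_eq hpos hr hr0 g]
          nlinarith [hpos (g 0), fSeries_nonneg hpos hr hr0 (fun n => g (n + 1))]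
  | succ k ih =>
    rw [fSeries_eq hpos hr hr0 g, fSeries_eq hpos hr hr0 h, ← heq 0 k.succ_pos]
    gcongr
    · exact hpos _
    · exact ih (fun i hi => heq (i + 1) (by omega)) hk

include hpos hr hr0 in
theorem fSeries_antitone : Antitone fun g : Lex (ℕ → ℕ) => fSeries u r (ofLex g) :=
  antitone_iff_forall_lt.2 fun _ _ ⟨_, heq, hk⟩ => fSeries_le_of_lex hpos hr hr0 heq hk

include hpos hr hr0 in
theorem fSeries_zero (h0 : 0 < r 0) : fSeries u r (fun _ => 0) = 1 := by
  have h := fSeries_eq hpos hr hr0 (fun _ => 0)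
  have hru : r 0 = 1 - u 0 := by simpa using hr 0
  -- `h` reads `s = r 0 + u 0 * s`, i.e. `r 0 * (s - 1) = 0`
  nlinarith

end FSeries

theorem exists_lt_one_forall_le {u : ℕ → ℝ} (hu : Tendsto u atTop (𝓝 0)) (h1 : ∀ n, u n < 1) :
    ∃ M < 1, ∀ n, u n ≤ M := by
  obtain ⟨N, hN⟩ := eventually_atTop.1 (hu.eventually (eventually_le_nhds one_half_pos))
  obtain ⟨m, -, hm⟩ := (range (N + 1)).exists_max_image u ⟨0, by simp⟩
  refine ⟨max (1 / 2) (u m), max_lt (by norm_num) (h1 m), fun n => ?_⟩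
  rcases le_or_gt n N with hn | hn
  · exact (hm n (mem_range.2 (by omega))).trans (le_max_right _ _)
  · exact (hN n hn.le).trans (le_max_left _ _)

section Surjective

variable {u r : ℕ → ℝ} (hpos : ∀ n, 0 ≤ u n) (hr : ∀ n, r n = 1 - ∑ i ∈ range (n + 1), u i)
  (hrpos : ∀ n, 0 < r n) (hu_sum : HasSum u 1)

include hr hu_sum in
theorem tendsto_r_atTop : Tendsto r atTop (𝓝 0) := by
  have h := tendsto_const_nhds (x := (1 : ℝ)) |>.sub
    (hu_sum.tendsto_sum_nat.comp (tendsto_add_atTop_nat 1))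
  rw [sub_self] at h
  exact h.congr fun n => (hr n).symm

include hr hu_sum in
/-- One step of the greedy expansion: the digit is the first `n` with `r n < s`. -/
theorem exists_eq_r_add_u_mul {s : ℝ} (hs : s ∈ Set.Ioc 0 1) :
    ∃ n, ∃ s' ∈ Set.Ioc (0 : ℝ) 1, s = r n + u n * s' := by
  classical
  have hex : ∃ n, r n < s := ((tendsto_r_atTop hr hu_sum).eventually (gt_mem_nhds hs.1)).exists
  set n := Nat.find hex
  have hlt : r n < s := Nat.find_spec hex
  have hle : s ≤ r n + u n := by
    rcases hn : n with _ | m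
    · simpa [r_add_u hr] using hs.2
    · have : ¬ r m < s := Nat.find_min hex (by omega)
      linarith [r_add_u hr (m + 1), hr m]
  have hu : 0 < u n := by linarith
  refine ⟨n, (s - r n) / u n, ⟨div_pos (by linarith) hu, (div_le_one hu).2 (by linarith)⟩, ?_⟩
  field_simp
  ring

include hpos hr hrpos in
theorem u_lt_one (n : ℕ) : u n < 1 := by
  linarith [r_add_u hr n, hrpos n, sum_nonneg fun i (_ : i ∈ range n) => hpos i]

include hpos hr hrpos hu_sum in
theorem exists_fSeries_eq {t : ℝ} (ht : t ∈ Set.Ioc 0 1) : ∃ c, fSeries u r c = t := by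
  choose! d next hnext hdecomp using
    fun s (hs : s ∈ Set.Ioc (0 : ℝ) 1) => exists_eq_r_add_u_mul hr hu_sum hs
  set T : ℕ → ℝ := fun k => next^[k] t
  have hT_succ (k : ℕ) : T (k + 1) = next (T k) := Function.iterate_succ_apply' next k t
  have hT (k : ℕ) : T k ∈ Set.Ioc 0 1 := by
    induction k with
    | zero => exact ht
    | succ k ih => rw [hT_succ]; exact hnext _ ih
  set c : ℕ → ℕ := fun k => d (T k)
  have hsplit (k : ℕ) :
      t = ∑ j ∈ range k, fTerm u r c j + (∏ i ∈ range k, u (c i)) * T k := by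
    induction k with
    | zero => simp [T]
    | succ k ih =>
      rw [ih, hdecomp _ (hT k), sum_range_succ, prod_range_succ, fTerm, hT_succ]
      ring
  obtain ⟨M, hM1, hM⟩ := exists_lt_one_forall_le hu_sum.summable.tendsto_atTop_zero
    (u_lt_one hpos hr hrpos)
  have hrem : Tendsto (fun k => (∏ i ∈ range k, u (c i)) * T k) atTop (𝓝 0) := by
    refine squeeze_zero (fun k => mul_nonneg (prod_nonneg fun i _ => hpos _) (hT k).1.le)
      (fun k => ?_) (tendsto_pow_atTop_nhds_zero_of_lt_one ((hpos 0).trans (hM 0)) hM1)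
    calc (∏ i ∈ range k, u (c i)) * T k ≤ ∏ i ∈ range k, u (c i) :=
          mul_le_of_le_one_right (prod_nonneg fun i _ => hpos _) (hT k).2
      _ ≤ ∏ i ∈ range k, M := prod_le_prod (fun i _ => hpos _) fun i _ => hM _
      _ = M ^ k := by simp
  have hr0 : ∀ n, 0 ≤ r n := fun n => (hrpos n).le
  refine ⟨c, (hasSum_fTerm hpos hr hr0 c).unique ?_⟩
  rw [hasSum_iff_tendsto_nat_of_nonneg (fTerm_nonneg hpos hr0 c)]
  have h := (tendsto_const_nhds (x := t)).sub hrem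
  rw [sub_zero] at h
  exact h.congr fun k => by linarith [hsplit k]

end Surjective

theorem cylinder_eq_biInter {Ω : Type*} (η : ℕ → Ω → ℕ) (c : ℕ → ℕ) (k : ℕ) :
    {ω | (∀ i < k, η i ω = c i) ∧ c k < η k ω} =
      ⋂ i ∈ range (k + 1), η i ⁻¹' (if i < k then {c i} else Set.Ioi (c k)) := by
  ext ω
  simp +contextual [Nat.le_iff_lt_or_eq, or_imp, forall_and]

section Distribution

variable {Ω : Type*} [MeasurableSpace Ω] {μ : Measure Ω} {u r : ℕ → ℝ}

theorem measure_preimage_Ioi [IsProbabilityMeasure μ] (hpos : ∀ n, 0 ≤ u n)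
    (hr : ∀ n, r n = 1 - ∑ i ∈ range (n + 1), u i) {X : Ω → ℕ} (hX : Measurable X)
    (hdist : ∀ n, μ {ω | X ω = n} = ENNReal.ofReal (u n)) (m : ℕ) :
    μ (X ⁻¹' Set.Ioi m) = ENNReal.ofReal (r m) := by
  have hcompl : X ⁻¹' Set.Ioi m = (⋃ n ∈ range (m + 1), X ⁻¹' {n})ᶜ := by
    ext ω
    simp only [Set.mem_preimage, Set.mem_Ioi, Set.mem_compl_iff, Set.mem_iUnion,
      Set.mem_singleton_iff, mem_range, not_exists]
    exact ⟨fun h n hn he => by omega, fun h => by by_contra! h'; exact h _ (by omega) rfl⟩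
  have hdisj : Set.PairwiseDisjoint (↑(range (m + 1))) fun n => X ⁻¹' {n} :=
    fun i _ j _ hij => Disjoint.preimage X (Set.disjoint_singleton.2 hij)
  rw [hcompl, prob_compl_eq_one_sub (Finset.measurableSet_biUnion _ fun n _ => hX (.singleton n)),
    measure_biUnion_finset hdisj fun n _ => hX (.singleton n)]
  simp only [Set.preimage, Set.mem_singleton_iff, hdist]
  rw [← ENNReal.ofReal_sum_of_nonneg fun n _ => hpos n, ← ENNReal.ofReal_one,
    ← ENNReal.ofReal_sub _ (sum_nonneg fun n _ => hpos n), hr]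

variable [IsProbabilityMeasure μ] (hpos : ∀ n, 0 ≤ u n)
  (hr : ∀ n, r n = 1 - ∑ i ∈ range (n + 1), u i) {η : ℕ → Ω → ℕ} (hη : ∀ k, Measurable (η k))
  (hind : iIndepFun η μ) (hdist : ∀ k n, μ {ω | η k ω = n} = ENNReal.ofReal (u n))

include hpos hr hη hind hdist in
theorem measure_cylinder (c : ℕ → ℕ) (k : ℕ) :
    μ {ω | (∀ i < k, η i ω = c i) ∧ c k < η k ω} = ENNReal.ofReal (fTerm u r c k) := by
  have hfirst : ∀ i ∈ range k,
      μ (η i ⁻¹' (if i < k then {c i} else Set.Ioi (c k))) = ENNReal.ofReal (u (c i)) :=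
    fun i hi => by rw [if_pos (mem_range.1 hi)]; exact hdist i (c i)
  rw [cylinder_eq_biInter, hind.meas_biInter fun i _ => ⟨_, .of_discrete, rfl⟩, prod_range_succ,
    prod_congr rfl hfirst, if_neg (lt_irrefl k), measure_preimage_Ioi hpos hr (hη k) (hdist k),
    ← ENNReal.ofReal_prod_of_nonneg fun i _ => hpos _,
    ← ENNReal.ofReal_mul (prod_nonneg fun i _ => hpos _), fTerm, mul_comm]

include hpos hr hη hind hdist in
theorem measure_toLex_lt (hr0 : ∀ n, 0 ≤ r n) (c : ℕ → ℕ) :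
    μ {ω | toLex c < toLex (fun n => η n ω)} = ENNReal.ofReal (fSeries u r c) := by
  set A : ℕ → Set Ω := fun k => {ω | (∀ i < k, η i ω = c i) ∧ c k < η k ω}
  have hunion : {ω | toLex c < toLex (fun n => η n ω)} = ⋃ k, A k := by
    ext ω
    simp only [Set.mem_iUnion]
    exact exists_congr fun k => and_congr_left' (forall₂_congr fun i _ => eq_comm)
  have hdisj : Pairwise (Disjoint on A) := by
    refine pairwise_disjoint_on _ |>.2 fun k l hkl => Set.disjoint_left.2 ?_
    rintro ω ⟨-, hk⟩ ⟨hl, -⟩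
    exact (hl k hkl ▸ hk).false
  have hA : ∀ k, MeasurableSet (A k) := fun k => by
    rw [show A k = _ from cylinder_eq_biInter η c k]
    exact Finset.measurableSet_biInter _ fun i _ => hη i .of_discrete
  rw [hunion, measure_iUnion hdisj hA, tsum_congr (measure_cylinder hpos hr hη hind hdist c),
    ← ENNReal.ofReal_tsum_of_nonneg (fTerm_nonneg hpos hr0 c) (summable_fTerm hpos hr hr0 c),
    (hasSum_fTerm hpos hr hr0 c).tsum_eq]

include hpos hr hη hind hdist in
theorem measure_engelSum_lt (hr0 : ∀ n, 0 ≤ r n) (g : ℕ → ℕ) :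
    μ {ω | engelSum (fun n => η n ω) < engelSum g} = ENNReal.ofReal (fSeries u r g) := by
  simpa only [engelSum_lt_engelSum_iff] using measure_toLex_lt hpos hr hη hind hdist hr0 g

end Distribution

theorem stmt12_general
    (u r : ℕ → ℝ)
    (hu_sum : HasSum u 1)
    (hr : ∀ n, r n = 1 - ∑ i ∈ Finset.range (n + 1), u i)
    (hr01 : ∀ n, 0 < r n ∧ r n < 1)
    (G : ℝ → ℕ → ℕ)
    (hG : ∀ x ∈ Set.Ioc (0:ℝ) 1, engelSum (G x) = x)
    (hGuniq : ∀ x ∈ Set.Ioc (0:ℝ) 1, ∀ g : ℕ → ℕ, engelSum g = x → g = G x)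
    (f : ℝ → ℝ)
    (hf : ∀ x ∈ Set.Ioc (0:ℝ) 1, f x = fSeries u r (G x))
    (hf0 : f 0 = 0)
    (hpos : ∀ n, 0 ≤ u n) :
    MonotoneOn f (Set.Icc (0:ℝ) 1) ∧ f 0 = 0 ∧ f 1 = 1 ∧
    ContinuousOn f (Set.Icc (0:ℝ) 1) ∧
    (∀ (Ω : Type) (mΩ : MeasurableSpace Ω) (μ : MeasureTheory.Measure Ω),
      MeasureTheory.IsProbabilityMeasure μ →
      ∀ η : ℕ → Ω → ℕ, (∀ k, Measurable (η k)) →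
      ProbabilityTheory.iIndepFun η μ →
      (∀ k n, μ {ω | η k ω = n} = ENNReal.ofReal (u n)) →
      ∀ x ∈ Set.Ioc (0:ℝ) 1,
        μ {ω | engelSum (fun n => η n ω) < x} = ENNReal.ofReal (f x)) := by
  have hrpos (n : ℕ) : 0 < r n := (hr01 n).1
  have hr0 (n : ℕ) : 0 ≤ r n := (hrpos n).le
  have hfG (g : ℕ → ℕ) : f (engelSum g) = fSeries u r g := by
    rw [hf _ (engelSum_mem_Ioc g), ← hGuniq _ (engelSum_mem_Ioc g) g rfl]
  have hmaps : Set.MapsTo f (Set.Icc 0 1) (Set.Icc 0 1) := by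
    rintro x ⟨hx0, hx1⟩
    rcases hx0.eq_or_lt with rfl | hx0
    · simp [hf0]
    · rw [hf x ⟨hx0, hx1⟩]
      exact ⟨fSeries_nonneg hpos hr hr0 _, fSeries_le_one hpos hr hr0 _⟩
  have hmono : MonotoneOn f (Set.Icc 0 1) := by
    rintro x ⟨hx0, hx1⟩ y hy hxy
    rcases hx0.eq_or_lt with rfl | hx0
    · exact hf0.symm ▸ (hmaps hy).1
    have hy' : y ∈ Set.Ioc 0 1 := ⟨hx0.trans_le hxy, hy.2⟩
    rw [hf x ⟨hx0, hx1⟩, hf y hy']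
    refine fSeries_antitone hpos hr hr0 (engelSum_le_engelSum_iff.1 ?_)
    rwa [hG x ⟨hx0, hx1⟩, hG y hy']
  have hsurj : Set.SurjOn f (Set.Icc 0 1) (Set.Icc 0 1) := by
    rintro t ⟨ht0, ht1⟩
    rcases ht0.eq_or_lt with rfl | ht0
    · exact ⟨0, Set.left_mem_Icc.2 zero_le_one, hf0⟩
    obtain ⟨c, hc⟩ := exists_fSeries_eq hpos hr hrpos hu_sum ⟨ht0, ht1⟩
    exact ⟨engelSum c, Set.Ioc_subset_Icc_self (engelSum_mem_Ioc c), (hfG c).trans hc⟩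
  have hf1 : f 1 = 1 := by
    simpa only [engelSum_zero, fSeries_zero hpos hr hr0 (hrpos 0)] using hfG fun _ => 0
  refine ⟨hmono, hf0, hf1, hmono.continuousOn_of_mapsTo_of_surjOn hmaps hsurj, ?_⟩
  intro Ω _ μ _ η hη hind hdist x hx
  rw [hf x hx, ← measure_engelSum_lt hpos hr hη hind hdist hr0, hG x hx]

/-- if all u_n ≥ 0 then f is a (continuous, non-decreasing)
probability distribution function on [0,1], and it is the distribution function of
ξ = Δ^E_{η₁η₂…} for any i.i.d. sequence (η_k) with P(η_k = n) = u_n. -/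
theorem stmt12
    (u r : ℕ → ℝ)
    (hu_sum : HasSum u 1)
    (hu_abs : ∀ n, |u n| < 1)
    (hr : ∀ n, r n = 1 - ∑ i ∈ Finset.range (n + 1), u i)
    (hr01 : ∀ n, 0 < r n ∧ r n < 1)
    (G : ℝ → ℕ → ℕ)
    (hG : ∀ x ∈ Set.Ioc (0:ℝ) 1, engelSum (G x) = x)
    (hGuniq : ∀ x ∈ Set.Ioc (0:ℝ) 1, ∀ g : ℕ → ℕ, engelSum g = x → g = G x)
    (f : ℝ → ℝ)
    (hf : ∀ x ∈ Set.Ioc (0:ℝ) 1, f x = fSeries u r (G x))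
    (hf0 : f 0 = 0)
    (hpos : ∀ n, 0 ≤ u n) :
    MonotoneOn f (Set.Icc (0:ℝ) 1) ∧ f 0 = 0 ∧ f 1 = 1 ∧
    ContinuousOn f (Set.Icc (0:ℝ) 1) ∧
    (∀ (Ω : Type) (mΩ : MeasurableSpace Ω) (μ : MeasureTheory.Measure Ω),
      MeasureTheory.IsProbabilityMeasure μ →
      ∀ η : ℕ → Ω → ℕ, (∀ k, Measurable (η k)) →
      ProbabilityTheory.iIndepFun η μ →
      (∀ k n, μ {ω | η k ω = n} = ENNReal.ofReal (u n)) →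
      ∀ x ∈ Set.Ioc (0:ℝ) 1,
        μ {ω | engelSum (fun n => η n ω) < x} = ENNReal.ofReal (f x)) :=
  stmt12_general u r hu_sum hr hr01 G hG hGuniq f hf hf0 hpos
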